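/- Let $p \in (0,1)$, $q = 1-p$, $0 < d \le 1 \le u$ with $u \ne d$, and set $\tilde{k}_0(n,u,d) = \lfloor n \ln(1/d)/\ln(u/d) \rfloor$. Then $A(n,u,d,p) = \sum_{k=0}^{\tilde{k}_0(n,u,d)} \binom{n}{k} (pu)^k (qd)^{n-k} \to 0$ as $n \to \infty$. -/

import Mathlib

/-!
Write the `k`-th term of `A` as `b(n,k) * u^k * d^(n-k)`, where `b(n,k)` is the binomial
probability; a number of heads `k ≤ k̃` is losing exactly when `u^k * d^(n-k) ≤ 1`.
Let `L = p log u + q log d`.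

If `L < 0`, raise `u^k * d^(n-k) ≤ 1` to a power `θ ∈ (0,1]` (Chernoff): this gives
`A ≤ (p u^θ + q d^θ)^n`, and the base is `< 1` for small `θ` because its derivative at `θ = 0`
is `L`.

If `L ≥ 0`, then `k̃ ≤ n p`, where `b(n, ·)` is increasing, while `u^k * d^(n-k)` decays like
`(d/u)^(k̃-k)` below `k̃`; hence `A ≤ b(n,k̃) / (1 - d/u)`. Finally `b(n,k) → 0` uniformly in
`k ≤ n p`: to the right of such a `k`, consecutive binomial probabilities differ by `O(m/n)`
over a stretch of length `m`, so `b(n,k)` is nearly matched by `m + 1` terms summing to at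
most `1`.
-/

open Filter

/-- Threshold separating losing from winning numbers of heads. -/
noncomputable def ktilde (n : ℕ) (u d : ℝ) : ℕ :=
  ⌊(n : ℝ) * Real.log (1/d) / Real.log (u/d)⌋₊

/-- Contribution of the losing outcomes to the expected payout, biased coin with
heads probability `p` and tails probability `q = 1 - p`. -/
noncomputable def A (n : ℕ) (u d p : ℝ) : ℝ :=
  ∑ k ∈ Finset.range (ktilde n u d + 1), (n.choose k : ℝ) * (p * u)^k * ((1 - p) * d)^(n-k)

open Finset Topology Real

noncomputable def binomProb (p : ℝ) (n k : ℕ) : ℝ :=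
  n.choose k * p ^ k * (1 - p) ^ (n - k)

lemma sum_binomProb_mul_pow (p x y : ℝ) (n : ℕ) :
    ∑ k ∈ range (n + 1), binomProb p n k * (x ^ k * y ^ (n - k)) = (p * x + (1 - p) * y) ^ n := by
  rw [add_pow]
  refine sum_congr rfl fun k _ => ?_
  rw [binomProb, mul_pow, mul_pow]
  ring

lemma sum_binomProb (p : ℝ) (n : ℕ) : ∑ k ∈ range (n + 1), binomProb p n k = 1 := by
  simpa using sum_binomProb_mul_pow p 1 1 n

section binomProb

variable {p : ℝ} {n k : ℕ}

lemma binomProb_nonneg (hp0 : 0 ≤ p) (hp1 : p ≤ 1) : 0 ≤ binomProb p n k := by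
  have : 0 ≤ 1 - p := by linarith
  unfold binomProb
  positivity

lemma binomProb_le_one (hp0 : 0 ≤ p) (hp1 : p ≤ 1) (hk : k ≤ n) : binomProb p n k ≤ 1 :=
  sum_binomProb p n ▸ single_le_sum (f := binomProb p n)
    (fun _ _ => binomProb_nonneg hp0 hp1) (mem_range_succ_iff.2 hk)

lemma binomProb_succ_mul (hk : k < n) :
    binomProb p n (k + 1) * ((k + 1) * (1 - p)) = binomProb p n k * ((n - k) * p) := by
  have hchoose : (n.choose (k + 1) : ℝ) * (k + 1) = n.choose k * ((n : ℝ) - k) := by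
    rw [← Nat.cast_sub hk.le]
    exact_mod_cast Nat.choose_succ_right_eq n k
  have hnk : n - k = n - (k + 1) + 1 := by omega
  rw [binomProb, binomProb, hnk, pow_succ, pow_succ]
  linear_combination (p ^ k * p * (1 - p) ^ (n - (k + 1)) * (1 - p)) * hchoose

lemma binomProb_le_binomProb_succ (hp0 : 0 ≤ p) (hp1 : p < 1) (hk : (k : ℝ) + 1 ≤ n * p) :
    binomProb p n k ≤ binomProb p n (k + 1) := by
  have hkn : k < n := by
    have : (k : ℝ) + 1 ≤ n := hk.trans (by nlinarith [(Nat.cast_nonneg n : (0 : ℝ) ≤ n)])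
    exact_mod_cast this
  have hq : 0 < (k + 1 : ℝ) * (1 - p) := by
    have : (0 : ℝ) < 1 - p := by linarith
    positivity
  refine le_of_mul_le_mul_right ?_ hq
  rw [binomProb_succ_mul hkn]
  exact mul_le_mul_of_nonneg_left (by nlinarith) (binomProb_nonneg hp0 hp1.le)

lemma binomProb_mono (hp0 : 0 ≤ p) (hp1 : p < 1) {j : ℕ} (hjk : j ≤ k) (hk : (k : ℝ) ≤ n * p) :
    binomProb p n j ≤ binomProb p n k := by
  induction k, hjk using Nat.le_induction with
  | base => rfl
  | succ k _ ih =>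
    push_cast at hk
    exact (ih (by linarith)).trans (binomProb_le_binomProb_succ hp0 hp1 hk)

lemma binomProb_sub_succ_le (hp0 : 0 < p) (hp1 : p < 1) {m : ℕ} (hk : k < n)
    (hkm : (k : ℝ) ≤ n * p + m) :
    binomProb p n k - binomProb p n (k + 1) ≤ (m + 1) / (n * p * (1 - p)) := by
  have hq : 0 < 1 - p := by linarith
  have hn : (0 : ℝ) < n := by exact_mod_cast (Nat.zero_le k).trans_lt hk
  have hb0 := binomProb_nonneg (n := n) (k := k) hp0.le hp1.le
  have hb1 := binomProb_nonneg (n := n) (k := k + 1) hp0.le hp1.le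
  have hb := binomProb_le_one hp0.le hp1.le hk.le
  have hrec := binomProb_succ_mul (p := p) hk
  rw [le_div_iff₀ (by positivity)]
  rcases le_or_gt (binomProb p n k) (binomProb p n (k + 1)) with hle | hlt
  · nlinarith [mul_pos (mul_pos hn hp0) hq]
  · have hdrop : (binomProb p n k - binomProb p n (k + 1)) * ((k + 1) * (1 - p))
        = binomProb p n k * (k + (1 - p) - n * p) := by linear_combination -hrec
    have hknp : n * p < k + 1 := by
      have : 0 < binomProb p n k * (k + (1 - p) - n * p) := by
        rw [← hdrop]; exact mul_pos (by linarith) (by positivity)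
      linarith [pos_of_mul_pos_right this hb0]
    calc (binomProb p n k - binomProb p n (k + 1)) * (n * p * (1 - p))
        ≤ (binomProb p n k - binomProb p n (k + 1)) * ((k + 1) * (1 - p)) := by gcongr
      _ ≤ m + 1 := by rw [hdrop]; nlinarith

lemma binomProb_le_inv_add (hp0 : 0 < p) (hp1 : p < 1) {m : ℕ} (hk : (k : ℝ) ≤ n * p)
    (hkm : k + m ≤ n) :
    binomProb p n k ≤ 1 / (m + 1) + m * (m + 1) / (n * p * (1 - p)) := by
  set δ : ℝ := (m + 1) / (n * p * (1 - p))
  have hδ : 0 ≤ δ := by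
    have : 0 ≤ 1 - p := by linarith
    positivity
  have hnear : ∀ j ∈ range (m + 1), binomProb p n k ≤ binomProb p n (k + j) + m * δ := by
    intro j hj
    have hjm : j ≤ m := mem_range_succ_iff.1 hj
    have hsteps :
        ∑ i ∈ range j, (binomProb p n (k + i) - binomProb p n (k + (i + 1))) ≤ j * δ := by
      simpa using sum_le_card_nsmul (range j)
        (fun i => binomProb p n (k + i) - binomProb p n (k + (i + 1))) δ fun i hi => by
          have him : i < m := (mem_range.1 hi).trans_le hjm
          exact binomProb_sub_succ_le hp0 hp1 (by omega)
            (by push_cast; linarith [(Nat.cast_lt (α := ℝ)).2 him])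
    rw [sum_range_sub' (fun i => binomProb p n (k + i)), add_zero] at hsteps
    nlinarith [(Nat.cast_le (α := ℝ)).2 hjm]
  have hwindow : ∑ j ∈ range (m + 1), binomProb p n (k + j) ≤ 1 := by
    rw [← sum_binomProb p n]
    refine (sum_map (range (m + 1)) (addLeftEmbedding k) (binomProb p n)).symm.trans_le
      (sum_le_sum_of_subset_of_nonneg ?_ fun _ _ _ => binomProb_nonneg hp0.le hp1.le)
    intro i
    simp only [Finset.mem_map, mem_range, addLeftEmbedding_apply]
    omega
  have hsum := sum_le_sum hnear
  rw [sum_add_distrib] at hsum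
  simp only [sum_const, card_range, nsmul_eq_mul, Nat.cast_add, Nat.cast_one] at hsum
  rw [mul_div_assoc, div_add' _ _ _ (by positivity), le_div_iff₀ (by positivity)]
  nlinarith

theorem tendsto_binomProb_of_le_mul (hp0 : 0 < p) (hp1 : p < 1) {k : ℕ → ℕ}
    (hk : ∀ n, (k n : ℝ) ≤ n * p) : Tendsto (fun n => binomProb p n (k n)) atTop (𝓝 0) := by
  refine tendsto_order.2 ⟨fun a ha => Eventually.of_forall fun n =>
    ha.trans_le (binomProb_nonneg hp0.le hp1.le), fun ε hε => ?_⟩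
  obtain ⟨m, hm⟩ := exists_nat_one_div_lt (half_pos hε)
  have hvanish : Tendsto (fun n : ℕ => m * (m + 1) / (p * (1 - p)) / n) atTop (𝓝 0) :=
    tendsto_const_div_atTop_nhds_zero_nat _
  filter_upwards [hvanish.eventually_lt_const (half_pos hε),
    tendsto_natCast_atTop_atTop.eventually_ge_atTop (m / (1 - p))] with n hsmall hlarge
  have hkm : k n + m ≤ n := by
    have hm' : (m : ℝ) ≤ n * (1 - p) := by rwa [div_le_iff₀ (by linarith)] at hlarge
    have : (k n : ℝ) + m ≤ n := by linarith [hk n]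
    exact_mod_cast this
  calc binomProb p n (k n) ≤ 1 / (m + 1) + m * (m + 1) / (n * p * (1 - p)) :=
        binomProb_le_inv_add hp0 hp1 (hk n) hkm
    _ < ε / 2 + ε / 2 := by
        rw [div_div, mul_comm (p * (1 - p)), ← mul_assoc] at hsmall
        exact add_lt_add hm hsmall
    _ = ε := add_halves ε

end binomProb

lemma eventually_lt_of_hasDerivAt_neg {f : ℝ → ℝ} {f' x : ℝ} (hf : HasDerivAt f f' x)
    (hf' : f' < 0) : ∀ᶠ y in 𝓝[>] x, f y < f x := by
  filter_upwards [hf.hasDerivWithinAt.limsup_slope_le' (lt_irrefl x) hf', self_mem_nhdsWithin]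
    with y hslope hxy
  rw [slope_def_field, div_lt_iff₀ (sub_pos.2 hxy), zero_mul] at hslope
  exact sub_neg.1 hslope

lemma A_eq_sum_binomProb (n : ℕ) (u d p : ℝ) :
    A n u d p = ∑ k ∈ range (ktilde n u d + 1), binomProb p n k * (u ^ k * d ^ (n - k)) := by
  refine sum_congr rfl fun k _ => ?_
  rw [binomProb, mul_pow, mul_pow]
  ring

section Payout

variable {u d p : ℝ} {n k : ℕ}

lemma A_nonneg (hp0 : 0 ≤ p) (hp1 : p ≤ 1) (hd0 : 0 ≤ d) (hu0 : 0 ≤ u) (n : ℕ) :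
    0 ≤ A n u d p := by
  rw [A_eq_sum_binomProb]
  exact sum_nonneg fun _ _ => mul_nonneg (binomProb_nonneg hp0 hp1) (by positivity)

lemma pow_mul_pow_sub_eq_div_pow_mul_pow (u : ℝ) (hd : d ≠ 0) (hk : k ≤ n) :
    u ^ k * d ^ (n - k) = (u / d) ^ k * d ^ n := by
  rw [div_pow, div_mul_eq_mul_div, eq_div_iff (pow_ne_zero _ hd), mul_assoc, ← pow_add,
    Nat.sub_add_cancel hk]

lemma ktilde_le (hd0 : 0 < d) (hdu : d < u) (hu : 1 ≤ u) (n : ℕ) : ktilde n u d ≤ n := by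
  have hlog : log (1 / d) ≤ log (u / d) :=
    log_le_log (by positivity) (by gcongr)
  refine Nat.floor_le_of_le ?_
  rw [mul_div_assoc]
  exact mul_le_of_le_one_right (Nat.cast_nonneg n)
    (div_le_one_of_le₀ hlog (log_pos ((one_lt_div hd0).2 hdu)).le)

lemma pow_mul_pow_sub_le_one (hd0 : 0 < d) (hd1 : d ≤ 1) (hdu : d < u) (hu : 1 ≤ u)
    (hk : k ≤ ktilde n u d) : u ^ k * d ^ (n - k) ≤ 1 := by
  have hud : 0 < log (u / d) := log_pos ((one_lt_div hd0).2 hdu)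
  have hkα : (k : ℝ) * log (u / d) ≤ n * log (1 / d) := by
    rw [← le_div_iff₀ hud]
    exact (Nat.cast_le.2 hk).trans (Nat.floor_le (by
      have : 0 ≤ log (1 / d) := log_nonneg ((one_le_div hd0).2 hd1)
      positivity))
  have hpow : (u / d) ^ k ≤ (1 / d) ^ n := by
    rw [← log_le_log_iff (by positivity) (by positivity), log_pow, log_pow]
    exact hkα
  rw [pow_mul_pow_sub_eq_div_pow_mul_pow u hd0.ne' (hk.trans (ktilde_le hd0 hdu hu n))]
  calc (u / d) ^ k * d ^ n ≤ (1 / d) ^ n * d ^ n := by gcongr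
    _ = 1 := by rw [← mul_pow, one_div_mul_cancel hd0.ne', one_pow]

lemma A_le_rpow (hp0 : 0 < p) (hp1 : p < 1) (hd0 : 0 < d) (hd1 : d ≤ 1) (hdu : d < u)
    (hu : 1 ≤ u) {θ : ℝ} (hθ : θ ≤ 1) (n : ℕ) :
    A n u d p ≤ (p * u ^ θ + (1 - p) * d ^ θ) ^ n := by
  have hu0 : 0 < u := hd0.trans hdu
  rw [A_eq_sum_binomProb, ← sum_binomProb_mul_pow]
  calc ∑ k ∈ range (ktilde n u d + 1), binomProb p n k * (u ^ k * d ^ (n - k))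
      ≤ ∑ k ∈ range (ktilde n u d + 1), binomProb p n k * ((u ^ θ) ^ k * (d ^ θ) ^ (n - k)) := by
        refine sum_le_sum fun k hk => mul_le_mul_of_nonneg_left ?_ (binomProb_nonneg hp0.le hp1.le)
        have hle := pow_mul_pow_sub_le_one hd0 hd1 hdu hu (mem_range_succ_iff.1 hk)
        rw [rpow_pow_comm hu0.le, rpow_pow_comm hd0.le, ← mul_rpow (by positivity) (by positivity)]
        simpa using rpow_le_rpow_of_exponent_ge (by positivity) hle hθ
    _ ≤ ∑ k ∈ range (n + 1), binomProb p n k * ((u ^ θ) ^ k * (d ^ θ) ^ (n - k)) :=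
        sum_le_sum_of_subset_of_nonneg
          (range_subset_range.2 (Nat.succ_le_succ (ktilde_le hd0 hdu hu n)))
          fun _ _ _ => mul_nonneg (binomProb_nonneg hp0.le hp1.le) (by positivity)

lemma exists_rpow_lt_one (hd0 : 0 < d) (hu0 : 0 < u)
    (hL : p * log u + (1 - p) * log d < 0) :
    ∃ θ : ℝ, θ ≤ 1 ∧ p * u ^ θ + (1 - p) * d ^ θ < 1 := by
  have hderiv : HasDerivAt (fun θ : ℝ => p * u ^ θ + (1 - p) * d ^ θ)
      (p * log u + (1 - p) * log d) 0 := by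
    have h := ((hasStrictDerivAt_const_rpow hu0 0).hasDerivAt.const_mul p).add
      ((hasStrictDerivAt_const_rpow hd0 0).hasDerivAt.const_mul (1 - p))
    rwa [rpow_zero, rpow_zero, one_mul, one_mul] at h
  obtain ⟨θ, hlt, hθ⟩ :=
    ((eventually_lt_of_hasDerivAt_neg hderiv hL).and (Ioc_mem_nhdsGT one_pos)).exists
  exact ⟨θ, hθ.2, by simpa using hlt⟩

lemma ktilde_le_mul (hp0 : 0 ≤ p) (hd0 : 0 < d) (hdu : d < u)
    (hL : 0 ≤ p * log u + (1 - p) * log d) (n : ℕ) : (ktilde n u d : ℝ) ≤ n * p := by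
  have hα : log (1 / d) / log (u / d) ≤ p := by
    rw [div_le_iff₀ (log_pos ((one_lt_div hd0).2 hdu)), one_div, log_inv,
      log_div (hd0.trans hdu).ne' hd0.ne']
    linarith
  calc (ktilde n u d : ℝ) ≤ ⌊(n : ℝ) * p⌋₊ := by
        refine Nat.cast_le.2 (Nat.floor_le_floor ?_)
        rw [mul_div_assoc]
        exact mul_le_mul_of_nonneg_left hα (Nat.cast_nonneg n)
    _ ≤ n * p := Nat.floor_le (by positivity)

lemma A_le_binomProb_ktilde (hp0 : 0 < p) (hp1 : p < 1) (hd0 : 0 < d) (hd1 : d ≤ 1)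
    (hdu : d < u) (hu : 1 ≤ u) (hL : 0 ≤ p * log u + (1 - p) * log d) (n : ℕ) :
    A n u d p ≤ (1 - d / u)⁻¹ * binomProb p n (ktilde n u d) := by
  set K := ktilde n u d
  have hK : K ≤ n := ktilde_le hd0 hdu hu n
  have hu0 : 0 < u := hd0.trans hdu
  have hterm : ∀ k ∈ range (K + 1),
      binomProb p n k * (u ^ k * d ^ (n - k)) ≤ binomProb p n K * (d / u) ^ (K - k) := by
    intro k hk
    have hkK := mem_range_succ_iff.1 hk
    have hcancel : (d / u) ^ (K - k) * (u / d) ^ (K - k) = 1 := by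
      rw [← mul_pow, div_mul_div_comm, mul_comm d u, div_self (by positivity), one_pow]
    have hshift : u ^ k * d ^ (n - k) = (d / u) ^ (K - k) * (u ^ K * d ^ (n - K)) := by
      rw [pow_mul_pow_sub_eq_div_pow_mul_pow u hd0.ne' (hkK.trans hK),
        pow_mul_pow_sub_eq_div_pow_mul_pow u hd0.ne' hK, ← pow_sub_mul_pow (u / d) hkK]
      linear_combination (-(u / d) ^ k * d ^ n) * hcancel
    rw [hshift, mul_left_comm]
    calc (d / u) ^ (K - k) * (binomProb p n k * (u ^ K * d ^ (n - K)))
        ≤ (d / u) ^ (K - k) * (binomProb p n K * 1) := by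
          gcongr
          · exact binomProb_nonneg hp0.le hp1.le
          · exact binomProb_mono hp0.le hp1 hkK (ktilde_le_mul hp0.le hd0 hdu hL n)
          · exact pow_mul_pow_sub_le_one hd0 hd1 hdu hu le_rfl
      _ = binomProb p n K * (d / u) ^ (K - k) := by ring
  have hreflect := sum_range_reflect (fun i => (d / u) ^ i) (K + 1)
  simp only [add_tsub_cancel_right] at hreflect
  calc A n u d p ≤ ∑ k ∈ range (K + 1), binomProb p n K * (d / u) ^ (K - k) :=
        (A_eq_sum_binomProb n u d p).trans_le (sum_le_sum hterm)
    _ ≤ binomProb p n K * (1 - d / u)⁻¹ := by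
        rw [← mul_sum, hreflect]
        gcongr
        · exact binomProb_nonneg hp0.le hp1.le
        · simpa [← range_eq_Ico] using
            geom_sum_Ico_le_of_lt_one (m := 0) (n := K + 1) (by positivity) ((div_lt_one hu0).2 hdu)
    _ = (1 - d / u)⁻¹ * binomProb p n K := mul_comm _ _

end Payout

theorem losing_contribution_tendsto_zero_biased (u d p : ℝ)
    (hp0 : 0 < p) (hp1 : p < 1)
    (hd0 : 0 < d) (hd1 : d ≤ 1) (hu : 1 ≤ u) (hne : u ≠ d) :
    Tendsto (fun n : ℕ => A n u d p) atTop (nhds 0) := by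
  have hdu : d < u := lt_of_le_of_ne (hd1.trans hu) hne.symm
  have hu0 : 0 < u := hd0.trans hdu
  have hA0 : ∀ n, 0 ≤ A n u d p := A_nonneg hp0.le hp1.le hd0.le hu0.le
  rcases lt_or_ge (p * log u + (1 - p) * log d) 0 with hL | hL
  · obtain ⟨θ, hθ, hlt⟩ := exists_rpow_lt_one hd0 hu0 hL
    have hbase : 0 ≤ p * u ^ θ + (1 - p) * d ^ θ := by
      have : 0 ≤ 1 - p := by linarith
      positivity
    exact squeeze_zero hA0 (A_le_rpow hp0 hp1 hd0 hd1 hdu hu hθ)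
      (tendsto_pow_atTop_nhds_zero_of_lt_one hbase hlt)
  · have hmode := (tendsto_binomProb_of_le_mul hp0 hp1 (ktilde_le_mul hp0.le hd0 hdu hL)).const_mul
      (1 - d / u)⁻¹
    rw [mul_zero] at hmode
    exact squeeze_zero hA0 (A_le_binomProb_ktilde hp0 hp1 hd0 hd1 hdu hu hL) hmode
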